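/- If n < 2k and the updating agent I(t) is chosen independently and uniformly at random from {1,…,n} at each time t, then the k-nearest-neighbor dynamics converges almost surely to a consensus x(t) → c·1, with c ∈ [min_i x_i(0), max_i x_i(0)]. -/

import Mathlib

open scoped Classical
open Finset

noncomputable def nearList {n : ℕ} (x : Fin n → ℝ) (i : Fin n) : List (Fin n) :=
  @List.insertionSort (Fin n)
    (fun j j' => |x j - x i| < |x j' - x i| ∨ (|x j - x i| = |x j' - x i| ∧ j ≤ j'))
    (Classical.decRel _) (List.finRange n)

/-- The set of the `k` agents nearest to `i` in opinion distance (ties broken by lower index). -/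
noncomputable def nbr {n : ℕ} (k : ℕ) (x : Fin n → ℝ) (i : Fin n) : Finset (Fin n) :=
  ((nearList x i).take k).toFinset

/-- The asynchronous update `f(x,i)`. -/
noncomputable def upd {n : ℕ} (k : ℕ) (x : Fin n → ℝ) (i : Fin n) : Fin n → ℝ :=
  Function.update x i ((∑ j ∈ nbr k x i, x j) / k)

/-- A configuration is clustered if all neighbors of every agent share its opinion. -/
def Clustered {n : ℕ} (k : ℕ) (x : Fin n → ℝ) : Prop :=
  ∀ i : Fin n, ∀ j ∈ nbr k x i, x j = x i

/-- `μ(x)`: lowest index attaining the minimum. -/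
noncomputable def argminIdx {n : ℕ} [NeZero n] (x : Fin n → ℝ) : Fin n :=
  (Finset.univ.filter fun i => ∀ j, x i ≤ x j).min' (by
    obtain ⟨i, -, hi⟩ := Finset.exists_min_image Finset.univ x Finset.univ_nonempty
    exact ⟨i, Finset.mem_filter.mpr ⟨Finset.mem_univ _, fun j => hi j (Finset.mem_univ j)⟩⟩)

/-- `M(x)`: lowest index attaining the maximum. -/
noncomputable def argmaxIdx {n : ℕ} [NeZero n] (x : Fin n → ℝ) : Fin n :=
  argminIdx (fun i => -x i)

/-- Trajectory of the dynamics with (possibly state-dependent) update selector `σ`. -/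
noncomputable def traj {n : ℕ} (k : ℕ) (σ : ℕ → (Fin n → ℝ) → Fin n) (x0 : Fin n → ℝ) :
    ℕ → Fin n → ℝ
  | 0 => x0
  | t + 1 => upd k (traj k σ x0 t) (σ t (traj k σ x0 t))


/-!
Each update replaces one opinion by an average of `k` current opinions, so the minimum never
decreases and the maximum never increases. Let `a` be the midpoint of the current range
`[m, M]`. Since `n < 2k`, fewer than `k` agents lie strictly above `a` or fewer than `k` lie
strictly below it; in the first case, updating each agent above `a` once brings every opinion
down to at most `M - (M - m) / (2k)`, because every neighbourhood of `k` agents contains an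
agent that has not moved and sits at or below `a`. Hence from every state some block of `n`
updates shrinks the range by the factor `1 - 1/(2k)`. Whatever happened before, the next `n`
independent uniform choices form that block with probability `n⁻ⁿ`, so almost surely this
happens in infinitely many blocks; the range then tends to `0` while its endpoints are
monotone, which forces consensus.
-/

open Filter Function MeasureTheory ProbabilityTheory Topology
open scoped ENNReal

lemma Antitone.tendsto_zero_of_forall_exists_le_mul {D : ℕ → ℝ} (hD : Antitone D)
    (h0 : ∀ t, 0 ≤ D t) {ρ : ℝ} (hρ : ρ < 1) (h : ∀ t, ∃ s, D s ≤ ρ * D t) :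
    Tendsto D atTop (𝓝 0) := by
  have hbdd : BddBelow (Set.range D) := ⟨0, Set.forall_mem_range.2 h0⟩
  have hlim := tendsto_atTop_ciInf hD hbdd
  have hd0 : 0 ≤ ⨅ t, D t := le_ciInf h0
  have hdρ : ⨅ t, D t ≤ ρ * ⨅ t, D t := ge_of_tendsto' (hlim.const_mul ρ) fun t =>
    (h t).elim fun s hs => (ciInf_le hbdd s).trans hs
  rwa [show ⨅ t, D t = 0 by nlinarith] at hlim

lemma exists_tendsto_const_of_mem_Icc {ι : Type*} [Nonempty ι] {x : ℕ → ι → ℝ} {a b : ℕ → ℝ}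
    (ha : Monotone a) (hb : Antitone b) (hx : ∀ t i, x t i ∈ Set.Icc (a t) (b t))
    (hgap : Tendsto (fun t => b t - a t) atTop (𝓝 0)) :
    ∃ c, a 0 ≤ c ∧ c ≤ b 0 ∧ Tendsto x atTop (𝓝 fun _ => c) := by
  have hab (t : ℕ) : a t ≤ b 0 :=
    (hx t (Classical.arbitrary ι)).1.trans ((hx t _).2.trans (hb (Nat.zero_le t)))
  have hbdd : BddAbove (Set.range a) := ⟨b 0, Set.forall_mem_range.2 hab⟩
  have hlima := tendsto_atTop_ciSup ha hbdd
  have hlimb : Tendsto b atTop (𝓝 (⨆ t, a t)) := by simpa using hlima.add hgap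
  exact ⟨⨆ t, a t, le_ciSup hbdd 0, ciSup_le hab, tendsto_pi_nhds.2 fun i =>
    tendsto_of_tendsto_of_tendsto_of_le_of_le hlima hlimb (fun t => (hx t i).1) fun t => (hx t i).2⟩

section Neighbors

variable {n k : ℕ}

lemma card_nbr (hkn : k ≤ n) (x : Fin n → ℝ) (i : Fin n) : #(nbr k x i) = k := by
  have hperm : (nearList x i).Perm (List.finRange n) :=
    @List.perm_insertionSort (Fin n) _ (Classical.decRel _) (List.finRange n)
  rw [nbr, List.toFinset_card_of_nodup
    ((hperm.nodup_iff.2 (List.nodup_finRange n)).sublist (List.take_sublist _ _))]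
  simp [hperm.length_eq, hkn]

lemma nbr_neg (x : Fin n → ℝ) (i : Fin n) : nbr k (-x) i = nbr k x i := by
  simp only [nbr, nearList, Pi.neg_apply, neg_sub_neg, abs_sub_comm (x i)]
  congr

lemma upd_neg (x : Fin n → ℝ) (i : Fin n) : upd k (-x) i = -upd k x i := by
  ext j
  rcases eq_or_ne j i with rfl | hne
  · simp [upd, nbr_neg, sum_neg_distrib, neg_div]
  · simp [upd, hne]

variable (hk : 1 ≤ k) (hkn : k ≤ n) {x : Fin n → ℝ} {M : ℝ}
include hk hkn

lemma upd_le (hM : ∀ j, x j ≤ M) (i j : Fin n) : upd k x i j ≤ M := by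
  rcases eq_or_ne j i with rfl | hne
  · have hsum := sum_le_card_nsmul (nbr k x j) x M fun j _ => hM j
    rw [card_nbr hkn, nsmul_eq_mul] at hsum
    rw [upd, Function.update_self, div_le_iff₀ (by exact_mod_cast hk), mul_comm]
    exact hsum
  · simpa [upd, hne] using hM j

lemma upd_self_le_of_mem_nbr (hM : ∀ j, x j ≤ M) {i j₀ : Fin n} (hj₀ : j₀ ∈ nbr k x i) {a : ℝ}
    (ha : x j₀ ≤ a) : upd k x i i ≤ M - (M - a) / k := by
  have hk0 : (0 : ℝ) < k := by exact_mod_cast hk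
  have hrest := sum_le_card_nsmul ((nbr k x i).erase j₀) x M fun j _ => hM j
  rw [card_erase_of_mem hj₀, card_nbr hkn, nsmul_eq_mul, Nat.cast_sub hk, Nat.cast_one] at hrest
  rw [upd, Function.update_self, ← add_sum_erase _ _ hj₀, div_le_iff₀ hk0]
  calc x j₀ + ∑ j ∈ (nbr k x i).erase j₀, x j ≤ a + (k - 1) * M := add_le_add ha hrest
    _ = (M - (M - a) / k) * k := by field_simp; ring

end Neighbors

section Trajectory

variable {n k : ℕ}

lemma traj_neg (f : ℕ → Fin n) (x : Fin n → ℝ) (t : ℕ) :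
    traj k (fun s _ => f s) (-x) t = -traj k (fun s _ => f s) x t := by
  induction t with
  | zero => rfl
  | succ t ih => simp only [traj, ih, upd_neg]

lemma traj_congr {f g : ℕ → Fin n} {t : ℕ} (h : ∀ s < t, f s = g s) (x : Fin n → ℝ) :
    traj k (fun s _ => f s) x t = traj k (fun s _ => g s) x t := by
  induction t with
  | zero => rfl
  | succ t ih => simp only [traj, ih fun s hs => h s (by omega), h t (by omega)]

lemma traj_add (f : ℕ → Fin n) (x : Fin n → ℝ) (s t : ℕ) :
    traj k (fun u _ => f u) x (s + t) =
      traj k (fun u _ => f (s + u)) (traj k (fun u _ => f u) x s) t := by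
  induction t with
  | zero => rfl
  | succ t ih => rw [← add_assoc, traj, ih]; rfl

lemma traj_add_of_eq {f p : ℕ → Fin n} {m L : ℕ} (h : ∀ s < L, f (m + s) = p s)
    (x : Fin n → ℝ) :
    traj k (fun u _ => f u) x (m + L) = traj k (fun u _ => p u) (traj k (fun u _ => f u) x m) L :=
  (traj_add f x m L).trans (traj_congr h _)

variable (hk : 1 ≤ k) (hkn : k ≤ n) {x : Fin n → ℝ}
include hk hkn

lemma traj_le {M : ℝ} (hM : ∀ j, x j ≤ M) (σ : ℕ → (Fin n → ℝ) → Fin n) (t : ℕ) (j : Fin n) :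
    traj k σ x t j ≤ M := by
  induction t generalizing j with
  | zero => exact hM j
  | succ t ih => exact upd_le hk hkn ih _ j

lemma le_traj {m : ℝ} (hm : ∀ j, m ≤ x j) (f : ℕ → Fin n) (t : ℕ) (j : Fin n) :
    m ≤ traj k (fun s _ => f s) x t j := by
  have := traj_le hk hkn (x := -x) (M := -m) (fun j => neg_le_neg (hm j)) (fun s _ => f s) t j
  rwa [traj_neg, Pi.neg_apply, neg_le_neg_iff] at this

lemma antitone_iSup_traj (f : ℕ → Fin n) (x : Fin n → ℝ) :
    Antitone fun t => ⨆ j, traj k (fun s _ => f s) x t j := by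
  have : Nonempty (Fin n) := ⟨⟨0, by omega⟩⟩
  exact antitone_nat_of_succ_le fun t => ciSup_le <|
    upd_le hk hkn (le_ciSup (Finite.bddAbove_range _)) _

lemma monotone_iInf_traj (f : ℕ → Fin n) (x : Fin n → ℝ) :
    Monotone fun t => ⨅ j, traj k (fun s _ => f s) x t j := by
  have : Nonempty (Fin n) := ⟨⟨0, by omega⟩⟩
  refine monotone_nat_of_le_succ fun t => le_ciInf fun j => ?_
  rw [traj_add f x t 1]
  exact le_traj hk hkn (ciInf_le (Finite.bddBelow_range _)) _ 1 j

end Trajectory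

section Spread

variable {ι : Type*} [Nonempty ι]

noncomputable def spread (x : ι → ℝ) : ℝ := (⨆ i, x i) - ⨅ i, x i

lemma spread_nonneg [Finite ι] (x : ι → ℝ) : 0 ≤ spread x :=
  sub_nonneg.2 <| (ciInf_le (Finite.bddBelow_range x) (Classical.arbitrary ι)).trans
    (le_ciSup (Finite.bddAbove_range x) _)

lemma spread_le_of_forall_mem_Icc {x : ι → ℝ} {a b : ℝ} (h : ∀ i, x i ∈ Set.Icc a b) :
    spread x ≤ b - a :=
  sub_le_sub (ciSup_le fun i => (h i).2) (le_ciInf fun i => (h i).1)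

end Spread

section Contraction

variable {n k : ℕ} (hk : 1 ≤ k) (hkn : k ≤ n) {x : Fin n → ℝ} {M a : ℝ}
include hk hkn

lemma traj_updated_le_of_forall_mem {S : Finset (Fin n)} (hS : #S < k) (hM : ∀ j, x j ≤ M)
    (ha : ∀ j ∉ S, x j ≤ a) {p : ℕ → Fin n} (hp : ∀ t, p t ∈ S) (t : ℕ) :
    (∀ j ∉ S, traj k (fun s _ => p s) x t j = x j) ∧
      ∀ s < t, traj k (fun u _ => p u) x t (p s) ≤ M - (M - a) / k := by
  induction t with
  | zero => exact ⟨fun _ _ => rfl, fun _ h => absurd h (Nat.not_lt_zero _)⟩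
  | succ t ih =>
    set y := traj k (fun s _ => p s) x t
    obtain ⟨hyS, hyp⟩ := ih
    have hupd : traj k (fun s _ => p s) x (t + 1) = upd k y (p t) := rfl
    refine ⟨fun j hj => ?_, fun s hs => ?_⟩
    · rw [hupd, upd, Function.update_of_ne (ne_of_mem_of_not_mem (hp t) hj).symm, hyS j hj]
    rcases eq_or_ne (p s) (p t) with hst | hst
    -- `nbr k y (p t)` has `k > #S` members, so one of them is outside `S`, still at `x j₀ ≤ a`.
    · obtain ⟨j₀, hj₀, hj₀S⟩ := exists_mem_notMem_of_card_lt_card (s := S) (t := nbr k y (p t))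
        (by rw [card_nbr hkn]; exact hS)
      rw [hupd, hst]
      exact upd_self_le_of_mem_nbr hk hkn (traj_le hk hkn hM _ t) hj₀
        ((hyS j₀ hj₀S).trans_le (ha j₀ hj₀S))
    · rw [hupd, upd, Function.update_of_ne hst]
      exact hyp s (lt_of_le_of_ne (Nat.lt_succ_iff.1 hs) fun h => hst (h ▸ rfl))

lemma exists_traj_le_of_card_lt (hM : ∀ j, x j ≤ M) (haM : a ≤ M) (hS : #{j | a < x j} < k) :
    ∃ p : ℕ → Fin n, ∀ j, traj k (fun t _ => p t) x n j ≤ M - (M - a) / k := by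
  have haM' : a ≤ M - (M - a) / k := by
    have := div_le_self (sub_nonneg.2 haM) (Nat.one_le_cast.2 hk : (1 : ℝ) ≤ k)
    linarith
  set S : Finset (Fin n) := {j | a < x j}
  have ha : ∀ j ∉ S, x j ≤ a := by simp [S]
  rcases S.eq_empty_or_nonempty with hS0 | ⟨s₀, hs₀⟩
  · exact ⟨fun _ => ⟨0, by omega⟩,
      traj_le hk hkn (fun j => (ha j (by simp [hS0])).trans haM') _ n⟩
  let p : ℕ → Fin n := fun t => if h : t < n then (if ⟨t, h⟩ ∈ S then ⟨t, h⟩ else s₀) else s₀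
  have hp : ∀ t, p t ∈ S := fun t => by simp only [p]; split_ifs <;> assumption
  have hpj : ∀ j ∈ S, p j = j := fun j hj => by simp [p, j.isLt, hj]
  obtain ⟨hfix, hdone⟩ := traj_updated_le_of_forall_mem hk hkn hS hM ha hp n
  refine ⟨p, fun j => ?_⟩
  by_cases hj : j ∈ S
  · rw [← hpj j hj]
    exact hdone j j.isLt
  · rw [hfix j hj]
    exact (ha j hj).trans haM'

lemma exists_le_traj_of_card_lt {m : ℝ} (hm : ∀ j, m ≤ x j) (ham : m ≤ a)
    (hS : #{j | x j < a} < k) :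
    ∃ p : ℕ → Fin n, ∀ j, m + (a - m) / k ≤ traj k (fun t _ => p t) x n j := by
  obtain ⟨p, hp⟩ := exists_traj_le_of_card_lt hk hkn (x := -x) (M := -m) (a := -a)
    (fun j => neg_le_neg (hm j)) (neg_le_neg ham) (by simpa using hS)
  refine ⟨p, fun j => ?_⟩
  have hpj := hp j
  rw [traj_neg, Pi.neg_apply, show -m - -a = a - m by ring] at hpj
  linarith

lemma exists_spread_traj_le (hnk : n < 2 * k) (x : Fin n → ℝ) :
    ∃ p : ℕ → Fin n, spread (traj k (fun t _ => p t) x n) ≤ (1 - 1 / (2 * k)) * spread x := by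
  have : Nonempty (Fin n) := ⟨⟨0, by omega⟩⟩
  set m := ⨅ j, x j
  set M := ⨆ j, x j
  have hm : ∀ j, m ≤ x j := ciInf_le (Finite.bddBelow_range x)
  have hM : ∀ j, x j ≤ M := le_ciSup (Finite.bddAbove_range x)
  have hmM : m ≤ M := (hm (Classical.arbitrary _)).trans (hM _)
  have hk0 : (k : ℝ) ≠ 0 := by positivity
  set a := (m + M) / 2 with ha
  by_cases hS : #{j | a < x j} < k
  · obtain ⟨p, hp⟩ := exists_traj_le_of_card_lt hk hkn hM (by linarith [ha]) hS
    refine ⟨p, (spread_le_of_forall_mem_Icc fun j => ⟨le_traj hk hkn hm _ n j, hp j⟩).trans_eq ?_⟩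
    simp only [spread, a, m, M]
    field_simp
    ring
  · have hS' : #{j | x j < a} < k := by
      have hsplit := card_filter_add_card_filter_not (s := univ) fun j => a < x j
      have hsub := card_le_card (s := {j | x j < a}) (t := {j | ¬ a < x j})
        (monotone_filter_right _ fun j _ (h : x j < a) => not_lt.2 h.le)
      simp only [card_univ, Fintype.card_fin] at hsplit
      omega
    obtain ⟨p, hp⟩ := exists_le_traj_of_card_lt hk hkn hm (by linarith [ha]) hS'
    refine ⟨p, (spread_le_of_forall_mem_Icc fun j => ⟨hp j, traj_le hk hkn hM _ n j⟩).trans_eq ?_⟩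
    simp only [spread, a, m, M]
    field_simp
    ring

end Contraction

lemma exists_tendsto_traj_of_frequently_block {n k : ℕ} (hk : 1 ≤ k) (hkn : k ≤ n) {ρ : ℝ}
    (hρ0 : 0 ≤ ρ) (hρ1 : ρ < 1) {Ψ : (Fin n → ℝ) → ℕ → Fin n}
    (hΨ : ∀ x, spread (traj k (fun t _ => Ψ x t) x n) ≤ ρ * spread x) {f : ℕ → Fin n}
    {x0 : Fin n → ℝ}
    (hf : ∃ᶠ r in atTop, ∀ s < n, f (r * n + s) = Ψ (traj k (fun t _ => f t) x0 (r * n)) s) :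
    ∃ c, ⨅ j, x0 j ≤ c ∧ c ≤ ⨆ j, x0 j ∧
      Tendsto (traj k (fun t _ => f t) x0) atTop (𝓝 fun _ => c) := by
  have : Nonempty (Fin n) := ⟨⟨0, by omega⟩⟩
  set X := traj k (fun t _ => f t) x0
  have hsup := antitone_iSup_traj hk hkn f x0
  have hinf := monotone_iInf_traj hk hkn f x0
  have hspread : Antitone fun t => spread (X t) := fun s t hst => sub_le_sub (hsup hst) (hinf hst)
  refine exists_tendsto_const_of_mem_Icc hinf hsup
    (fun t j => ⟨ciInf_le (Finite.bddBelow_range _) j, le_ciSup (Finite.bddAbove_range _) j⟩)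
    (hspread.tendsto_zero_of_forall_exists_le_mul (fun t => spread_nonneg (X t)) hρ1 fun t => ?_)
  obtain ⟨r, hr, hblock⟩ := frequently_atTop.1 hf t
  refine ⟨r * n + n, ?_⟩
  calc spread (X (r * n + n)) = spread (traj k (fun s _ => Ψ (X (r * n)) s) (X (r * n)) n) :=
        congrArg spread (traj_add_of_eq hblock x0)
    _ ≤ ρ * spread (X (r * n)) := hΨ _
    _ ≤ ρ * spread (X t) :=
        mul_le_mul_of_nonneg_left (hspread (hr.trans (Nat.le_mul_of_pos_right r (by omega)))) hρ0


section Prefix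

variable {Ω α β : Type*} {I : ℕ → Ω → α} {m : ℕ}

def DependsOnPrefix (I : ℕ → Ω → α) (m : ℕ) (g : Ω → β) : Prop :=
  ∀ ω ω', (∀ t < m, I t ω = I t ω') → g ω = g ω'

lemma DependsOnPrefix.mono {m' : ℕ} {g : Ω → β} (hg : DependsOnPrefix I m g) (h : m ≤ m') :
    DependsOnPrefix I m' g :=
  fun ω ω' hω => hg ω ω' fun t ht => hω t (ht.trans_le h)

lemma DependsOnPrefix.comp {γ : Type*} {g : Ω → β} (hg : DependsOnPrefix I m g) (φ : β → γ) :
    DependsOnPrefix I m (φ ∘ g) :=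
  fun ω ω' hω => congrArg φ (hg ω ω' hω)

lemma DependsOnPrefix.eq_preimage_image {B : Set Ω} (hB : DependsOnPrefix I m (· ∈ B)) :
    B = (fun ω (t : range m) => I t ω) ⁻¹' ((fun ω (t : range m) => I t ω) '' B) := by
  refine (Set.subset_preimage_image _ _).antisymm ?_
  rintro ω ⟨ω', hω', heq⟩
  have := hB ω' ω fun t ht => congrFun heq ⟨t, mem_range.2 ht⟩
  simp_all

lemma DependsOnPrefix.inter {B C : Set Ω} (hB : DependsOnPrefix I m (· ∈ B))
    (hC : DependsOnPrefix I m (· ∈ C)) : DependsOnPrefix I m (· ∈ B ∩ C) :=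
  fun ω ω' h => by simp only [Set.mem_inter_iff, hB ω ω' h, hC ω ω' h]

lemma DependsOnPrefix.setOf_forall_lt_eq {g : Ω → ℕ → α} (hg : DependsOnPrefix I m g)
    (L : ℕ) : DependsOnPrefix I (m + L) (· ∈ {ω | ∀ s < L, I (m + s) ω = g ω s}) :=
  fun ω ω' h => by
    simp only [Set.mem_ofPred_eq, hg ω ω' fun t ht => h t (by omega)]
    exact propext <| forall₂_congr fun s hs => by rw [h _ (by omega)]

variable [MeasurableSpace Ω] [MeasurableSpace α] [MeasurableSingletonClass α] [Finite α]

lemma DependsOnPrefix.measurableSet (hmeas : ∀ t, Measurable (I t)) {B : Set Ω}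
    (hB : DependsOnPrefix I m (· ∈ B)) : MeasurableSet B := by
  rw [hB.eq_preimage_image]
  exact measurable_pi_lambda _ (fun t : range m => hmeas t) .of_discrete

lemma DependsOnPrefix.measure_inter_eq_mul {P : Measure Ω} (hmeas : ∀ t, Measurable (I t))
    (hindep : iIndepFun I P) {B : Set Ω} (hB : DependsOnPrefix I m (· ∈ B)) (a : α) :
    P (B ∩ {ω | I m ω = a}) = P B * P {ω | I m ω = a} := by
  have hind := hindep.indepFun_finset (range m) {m} (by simp) hmeas
  have hpt : {ω | I m ω = a} =
      (fun ω (t : ({m} : Finset ℕ)) => I t ω) ⁻¹' {v | v ⟨m, mem_singleton_self m⟩ = a} := rfl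
  rw [hpt, hB.eq_preimage_image]
  exact hind.measure_inter_preimage_eq_mul _ _ .of_discrete
    .of_discrete

lemma DependsOnPrefix.mul_measure_le_measure_inter_eq {P : Measure Ω}
    (hmeas : ∀ t, Measurable (I t)) (hindep : iIndepFun I P) {p : ℝ≥0∞}
    (hp : ∀ a, p ≤ P {ω | I m ω = a}) {B : Set Ω} (hB : DependsOnPrefix I m (· ∈ B))
    {g : Ω → α} (hg : DependsOnPrefix I m g) :
    p * P B ≤ P (B ∩ {ω | I m ω = g ω}) := by
  have hfiber (a : α) : DependsOnPrefix I m (· ∈ B ∩ {ω | g ω = a}) :=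
    hB.inter fun ω ω' h => by simp only [Set.mem_ofPred_eq, hg ω ω' h]
  have hdisj : Pairwise (Disjoint on fun a => B ∩ {ω | g ω = a}) := fun a b hab =>
    Set.disjoint_left.2 fun ω h1 h2 => hab (h1.2.symm.trans h2.2)
  -- Split `B` according to the value of `g`; each piece is independent of `I m`.
  calc p * P B = ∑' a, p * P (B ∩ {ω | g ω = a}) := by
        rw [ENNReal.tsum_mul_left, ← measure_iUnion hdisj fun a => (hfiber a).measurableSet hmeas,
          ← Set.inter_iUnion, Set.iUnion_eq_univ_iff.2 fun ω => ⟨g ω, rfl⟩, Set.inter_univ]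
    _ ≤ ∑' a, P (B ∩ {ω | g ω = a}) * P {ω | I m ω = a} :=
        ENNReal.tsum_le_tsum fun a => by rw [mul_comm]; gcongr; exact hp a
    _ = ∑' a, P (B ∩ {ω | g ω = a} ∩ {ω | I m ω = a}) := by
        simp only [(hfiber _).measure_inter_eq_mul hmeas hindep]
    _ = P (⋃ a, B ∩ {ω | g ω = a} ∩ {ω | I m ω = a}) := by
        refine (measure_iUnion (fun a b hab => ?_) fun a => ?_).symm
        · exact (hdisj hab).mono Set.inter_subset_left Set.inter_subset_left
        · exact ((hfiber a).measurableSet hmeas).inter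
            (measurableSet_eq_fun (hmeas m) measurable_const)
    _ = P (B ∩ {ω | I m ω = g ω}) := by
        congr 1
        ext ω
        simp [eq_comm]

lemma DependsOnPrefix.pow_mul_measure_le_measure_inter_block {P : Measure Ω}
    (hmeas : ∀ t, Measurable (I t)) (hindep : iIndepFun I P) {p : ℝ≥0∞}
    (hp : ∀ t a, p ≤ P {ω | I t ω = a}) {B : Set Ω} (hB : DependsOnPrefix I m (· ∈ B))
    {g : Ω → ℕ → α} (hg : DependsOnPrefix I m g) (L : ℕ) :
    p ^ L * P B ≤ P (B ∩ {ω | ∀ s < L, I (m + s) ω = g ω s}) := by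
  induction L with
  | zero => simp
  | succ L ih =>
    have hsucc : {ω | ∀ s < L + 1, I (m + s) ω = g ω s} =
        {ω | ∀ s < L, I (m + s) ω = g ω s} ∩ {ω | I (m + L) ω = g ω L} := by
      ext ω
      exact Nat.forall_lt_succ_right
    calc p ^ (L + 1) * P B = p * (p ^ L * P B) := by ring
      _ ≤ p * P (B ∩ {ω | ∀ s < L, I (m + s) ω = g ω s}) := by gcongr
      _ ≤ P (B ∩ {ω | ∀ s < L + 1, I (m + s) ω = g ω s}) := by
        rw [hsucc, ← Set.inter_assoc]
        exact ((hB.mono (by omega)).inter (hg.setOf_forall_lt_eq L)).mul_measure_le_measure_inter_eq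
          hmeas hindep (hp _) ((hg.mono (by omega)).comp (· L))

lemma measure_forall_lt_not_block_le {P : Measure Ω} [IsFiniteMeasure P]
    (hmeas : ∀ t, Measurable (I t)) (hindep : iIndepFun I P) {p : ℝ≥0∞}
    (hp : ∀ t a, p ≤ P {ω | I t ω = a}) {L : ℕ} {g : ℕ → Ω → ℕ → α}
    (hg : ∀ r, DependsOnPrefix I (r * L) (g r)) (r₀ R : ℕ) :
    P {ω | ∀ i < R, ¬ ∀ s < L, I ((r₀ + i) * L + s) ω = g (r₀ + i) ω s} ≤
      (1 - p ^ L) ^ R * P Set.univ := by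
  induction R with
  | zero => simp
  | succ R ih =>
    set B := {ω | ∀ i < R, ¬ ∀ s < L, I ((r₀ + i) * L + s) ω = g (r₀ + i) ω s}
    set E := {ω | ∀ s < L, I ((r₀ + R) * L + s) ω = g (r₀ + R) ω s}
    have hB : DependsOnPrefix I ((r₀ + R) * L) (· ∈ B) := fun ω ω' h =>
      propext <| forall₂_congr fun i hi => not_congr <| Eq.to_iff <|
        ((hg _).setOf_forall_lt_eq L).mono (by nlinarith) ω ω' h
    have hsucc : {ω | ∀ i < R + 1, ¬ ∀ s < L, I ((r₀ + i) * L + s) ω = g (r₀ + i) ω s} =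
        B \ (B ∩ E) := by
      ext ω
      rw [Set.sdiff_self_inter]
      exact Nat.forall_lt_succ_right
    have hBE : MeasurableSet (B ∩ E) :=
      ((hB.mono (by omega)).inter ((hg _).setOf_forall_lt_eq L)).measurableSet hmeas
    calc P {ω | ∀ i < R + 1, ¬ ∀ s < L, I ((r₀ + i) * L + s) ω = g (r₀ + i) ω s}
        = P B - P (B ∩ E) := by
          rw [hsucc, measure_sdiff Set.inter_subset_left hBE.nullMeasurableSet (measure_ne_top _ _)]
      _ ≤ P B - p ^ L * P B := by
          gcongr
          exact hB.pow_mul_measure_le_measure_inter_block hmeas hindep hp (hg _) L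
      _ = (1 - p ^ L) * P B := by
          rw [ENNReal.sub_mul fun _ _ => measure_ne_top _ _, one_mul]
      _ ≤ (1 - p ^ L) ^ (R + 1) * P Set.univ := by
          rw [pow_succ', mul_assoc]; gcongr

theorem ae_frequently_block_eq {P : Measure Ω} [IsFiniteMeasure P]
    (hmeas : ∀ t, Measurable (I t)) (hindep : iIndepFun I P) {p : ℝ≥0∞} (hp0 : p ≠ 0)
    (hp : ∀ t a, p ≤ P {ω | I t ω = a}) {L : ℕ} {g : ℕ → Ω → ℕ → α}
    (hg : ∀ r, DependsOnPrefix I (r * L) (g r)) :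
    ∀ᵐ ω ∂P, ∃ᶠ r in atTop, ∀ s < L, I (r * L + s) ω = g r ω s := by
  simp only [frequently_atTop, ae_all_iff]
  intro r₀
  have hlim : Tendsto (fun R => (1 - p ^ L) ^ R * P Set.univ) atTop (𝓝 0) := by
    simpa using ENNReal.Tendsto.mul_const (ENNReal.tendsto_pow_atTop_nhds_zero_of_lt_one
      (ENNReal.sub_lt_self ENNReal.one_ne_top one_ne_zero (pow_ne_zero L hp0)))
      (Or.inr (measure_ne_top P Set.univ))
  refine ae_iff.2 (le_antisymm (ge_of_tendsto' hlim fun R => ?_) bot_le)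
  refine le_trans (measure_mono ?_) (measure_forall_lt_not_block_le hmeas hindep hp hg r₀ R)
  exact fun ω hω i _ hi => hω ⟨r₀ + i, by omega, hi⟩

end Prefix

open MeasureTheory ProbabilityTheory in
theorem converges_to_consensus_general {n k : ℕ} (hk : 1 ≤ k) (hkn : k ≤ n)
    (hnk : n < 2 * k) {Ω : Type*} [MeasurableSpace Ω] (P : Measure Ω)
    [IsProbabilityMeasure P] (I : ℕ → Ω → Fin n)
    (hmeas : ∀ t, Measurable (I t))
    (hindep : iIndepFun I P)
    (hunif : ∀ t : ℕ, ∀ a : Fin n, P {ω | I t ω = a} = 1 / n)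
    (x0 : Fin n → ℝ) :
    ∀ᵐ ω ∂P, ∃ c : ℝ, sInf (Set.range x0) ≤ c ∧ c ≤ sSup (Set.range x0) ∧
      Filter.Tendsto (fun t => traj k (fun t _ => I t ω) x0 t) Filter.atTop
        (nhds (fun _ => c)) := by
  choose Ψ hΨ using exists_spread_traj_le hk hkn hnk
  have hmatch := ae_frequently_block_eq hmeas hindep (p := 1 / n) (by simp)
    (fun t a => (hunif t a).ge) (L := n)
    (g := fun r ω => Ψ (traj k (fun t _ => I t ω) x0 (r * n)))
    fun r ω ω' h => congrArg Ψ (traj_congr h x0)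
  have hk1 : (1 : ℝ) ≤ k := by exact_mod_cast hk
  filter_upwards [hmatch] with ω hω
  exact exists_tendsto_traj_of_frequently_block hk hkn
    (by rw [sub_nonneg, div_le_one (by positivity)]; linarith) (sub_lt_self 1 (by positivity))
    hΨ hω

open MeasureTheory ProbabilityTheory in
/-- if `n < 2k` and the updating agent is i.i.d. uniform, the dynamics
converges almost surely to a consensus within the initial opinion range. -/
theorem converges_to_consensus {n k : ℕ} [NeZero n] (hk : 1 ≤ k) (hkn : k ≤ n)
    (hnk : n < 2 * k) {Ω : Type*} [MeasurableSpace Ω] (P : Measure Ω)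
    [IsProbabilityMeasure P] (I : ℕ → Ω → Fin n)
    (hmeas : ∀ t, Measurable (I t))
    (hindep : iIndepFun I P)
    (hunif : ∀ t : ℕ, ∀ a : Fin n, P {ω | I t ω = a} = 1 / n)
    (x0 : Fin n → ℝ) :
    ∀ᵐ ω ∂P, ∃ c : ℝ, sInf (Set.range x0) ≤ c ∧ c ≤ sSup (Set.range x0) ∧
      Filter.Tendsto (fun t => traj k (fun t _ => I t ω) x0 t) Filter.atTop
        (nhds (fun _ => c)) :=
  converges_to_consensus_general hk hkn hnk P I hmeas hindep hunif x0
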